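/- Let F be a Randers norm with navigation data (h,W), ‖W‖_h < 1. If n satisfies F(n) = 1 and ν = L(n) is its Legendre dual covector, then n = n̄ + W, where n̄ is the h-unit vector h-dual to ν/h*(ν); in particular n̄ has h-norm 1. -/

import Mathlib

/-!
With `λ = 1 - ‖W‖²`, the Randers norm `F(y)` is the positive root of
`λ F² + 2 ⟪W, y⟫ F = ‖y‖²`, i.e. of `‖y - F • W‖ = F`. Differentiating the explicit
formula, `dF_y = ⟪y - F(y) • W, ·⟫ / (λ F(y) + ⟪W, y⟫)`, so the Riesz vector of the Legendre
transform `F(y) • dF_y` is a positive multiple of `y - F(y) • W`. Normalizing it gives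
`(y - F(y) • W) / F(y)`, which for `F(n) = 1` is `n - W`, of norm `F(n) = 1`.
-/

open scoped RealInnerProductSpace

namespace Randers

open NormedSpace (normalize normalize_smul_of_pos)

lemma one_sub_norm_sq_pos {E : Type*} [SeminormedAddGroup E] {w : E} (hw : ‖w‖ < 1) :
    0 < 1 - ‖w‖ ^ 2 :=
  sub_pos.mpr (pow_lt_one₀ (norm_nonneg w) hw two_ne_zero)

variable {V : Type*} [NormedAddCommGroup V] [InnerProductSpace ℝ V] {W : V}

noncomputable def radicand (W y : V) : ℝ := (1 - ‖W‖ ^ 2) * ⟪y, y⟫ + ⟪W, y⟫ ^ 2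

/-- The Randers norm with navigation data `(⟪·,·⟫, W)`: the positive root `F` of
`‖y - F • W‖ = F`. -/
noncomputable def randersNorm (W y : V) : ℝ :=
  (√(radicand W y) - ⟪W, y⟫) / (1 - ‖W‖ ^ 2)

lemma sqrt_radicand (hW : ‖W‖ < 1) (y : V) :
    √(radicand W y) = (1 - ‖W‖ ^ 2) * randersNorm W y + ⟪W, y⟫ := by
  have := (one_sub_norm_sq_pos hW).ne'
  rw [randersNorm]
  field_simp
  ring

lemma radicand_nonneg (hW : ‖W‖ < 1) (y : V) : 0 ≤ radicand W y := by
  have := one_sub_norm_sq_pos hW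
  have := real_inner_self_nonneg (x := y)
  unfold radicand
  positivity

lemma radicand_pos (hW : ‖W‖ < 1) {y : V} (hy : y ≠ 0) : 0 < radicand W y := by
  have := one_sub_norm_sq_pos hW
  have : 0 < ⟪y, y⟫ := real_inner_self_pos.mpr hy
  unfold radicand
  positivity

lemma randersNorm_nonneg (hW : ‖W‖ < 1) (y : V) : 0 ≤ randersNorm W y := by
  have hlam := one_sub_norm_sq_pos hW
  have hsq : ⟪W, y⟫ ^ 2 ≤ radicand W y := by
    have := real_inner_self_nonneg (x := y)
    unfold radicand
    nlinarith
  exact div_nonneg (sub_nonneg.mpr ((le_abs_self _).trans (Real.abs_le_sqrt hsq))) hlam.le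

lemma norm_sub_randersNorm_smul (hW : ‖W‖ < 1) (y : V) :
    ‖y - randersNorm W y • W‖ = randersNorm W y := by
  set F := randersNorm W y
  have hlam := one_sub_norm_sq_pos hW
  have hroot : (1 - ‖W‖ ^ 2) * F ^ 2 + 2 * ⟪W, y⟫ * F = ⟪y, y⟫ := by
    have h := Real.sq_sqrt (radicand_nonneg hW y)
    rw [sqrt_radicand hW, radicand] at h
    apply mul_left_cancel₀ hlam.ne'
    linear_combination h
  rw [← sq_eq_sq₀ (norm_nonneg _) (randersNorm_nonneg hW y), ← real_inner_self_eq_norm_sq,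
    real_inner_sub_sub_self]
  simp only [real_inner_smul_left, real_inner_smul_right, real_inner_self_eq_norm_sq W,
    real_inner_comm W y]
  linear_combination -hroot

lemma randersNorm_pos (hW : ‖W‖ < 1) {y : V} (hy : y ≠ 0) : 0 < randersNorm W y := by
  refine (randersNorm_nonneg hW y).lt_of_ne fun hF ↦ hy ?_
  simpa [← hF] using norm_sub_randersNorm_smul hW y

lemma hasFDerivAt_radicand (y : V) :
    HasFDerivAt (radicand W)
      ((2 * (1 - ‖W‖ ^ 2)) • innerSL ℝ y + (2 * ⟪W, y⟫) • innerSL ℝ W) y := by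
  have hself : HasFDerivAt (fun x : V => ⟪x, x⟫) (2 • innerSL ℝ y) y := by
    simpa only [real_inner_self_eq_norm_sq] using (hasStrictFDerivAt_norm_sq y).hasFDerivAt
  refine ((hself.const_mul (1 - ‖W‖ ^ 2)).add
    (((innerSL ℝ W).hasFDerivAt (x := y)).pow 2)).congr_fderiv ?_
  ext v
  simp only [coe_innerSL_apply, Nat.add_one_sub_one, pow_one, nsmul_eq_mul, Nat.cast_ofNat,
    add_apply, smul_apply, smul_eq_mul, add_left_inj]
  ring

lemma hasFDerivAt_randersNorm (hW : ‖W‖ < 1) {y : V} (hy : y ≠ 0) :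
    HasFDerivAt (randersNorm W)
      ((√(radicand W y))⁻¹ • innerSL ℝ (y - randersNorm W y • W)) y := by
  have hS := radicand_pos hW hy
  have h := (((hasFDerivAt_radicand y).sqrt hS.ne').sub
    ((innerSL ℝ W).hasFDerivAt (x := y))).mul_const (1 - ‖W‖ ^ 2)⁻¹
  refine h.congr_fderiv ?_
  ext v
  have hlam := (one_sub_norm_sq_pos hW).ne'
  have hs := (Real.sqrt_pos.mpr hS).ne'
  have hsF := sqrt_radicand hW y
  simp only [one_div, mul_inv_rev, smul_add, smul_apply, sub_apply, add_apply, coe_innerSL_apply,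
    smul_eq_mul, map_sub, map_smul]
  field_simp
  rw [hsF]
  ring

variable [CompleteSpace V]

lemma toDual_symm_legendre_randersNorm (hW : ‖W‖ < 1) {y : V} (hy : y ≠ 0) :
    (InnerProductSpace.toDual ℝ V).symm (randersNorm W y • fderiv ℝ (randersNorm W) y) =
      (randersNorm W y / √(radicand W y)) • (y - randersNorm W y • W) := by
  rw [(hasFDerivAt_randersNorm hW hy).fderiv, LinearIsometryEquiv.symm_apply_eq]
  ext v
  simp [InnerProductSpace.toDual_apply_apply, div_eq_mul_inv, mul_assoc]

lemma eq_randersNorm_smul_normalize_legendre_add (hW : ‖W‖ < 1) {y : V} (hy : y ≠ 0) :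
    y = randersNorm W y • (normalize ((InnerProductSpace.toDual ℝ V).symm
      (randersNorm W y • fderiv ℝ (randersNorm W) y)) + W) := by
  have hF := randersNorm_pos hW hy
  have hscale : 0 < randersNorm W y / √(radicand W y) :=
    div_pos hF (Real.sqrt_pos.mpr (radicand_pos hW hy))
  rw [toDual_symm_legendre_randersNorm hW hy, normalize_smul_of_pos hscale, NormedSpace.normalize,
    norm_sub_randersNorm_smul hW, smul_add, smul_smul, mul_inv_cancel₀ hF.ne', one_smul,
    sub_add_cancel]

end Randers

open Randers in
theorem stmt2_general (V : Type*) [NormedAddCommGroup V] [InnerProductSpace ℝ V]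
    [CompleteSpace V]
    (W : V) (hW : ‖W‖ < 1) (lam : ℝ) (hlam : lam = 1 - ‖W‖ ^ 2)
    (F : V → ℝ)
    (hF : ∀ y, F y = (Real.sqrt (lam * ⟪y, y⟫ + ⟪W, y⟫ ^ 2) - ⟪W, y⟫) / lam)
    (n : V) (hn : F n = 1)
    -- `ν = L(n) = F(n) • dF_n` is the Legendre transform of `n`
    (ν : V →L[ℝ] ℝ) (hν : ν = F n • fderiv ℝ F n)
    -- `u` is the `h`-dual (Riesz) vector of `ν`, so `n̄ = u / h*(ν) = u / ‖u‖`
    (u : V) (hu : u = (InnerProductSpace.toDual ℝ V).symm ν)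
    (nbar : V) (hnbar : nbar = ‖u‖⁻¹ • u) :
    n = nbar + W ∧ ‖nbar‖ = 1 := by
  subst hlam
  obtain rfl : F = randersNorm W := funext hF
  have hn0 : n ≠ 0 := by
    rintro rfl
    simp [randersNorm, radicand] at hn
  have hnbar_add : n = nbar + W := by
    have := eq_randersNorm_smul_normalize_legendre_add hW hn0
    rwa [← hν, ← hu, hn, one_smul, NormedSpace.normalize, ← hnbar] at this
  refine ⟨hnbar_add, ?_⟩
  simpa [eq_sub_of_add_eq hnbar_add.symm, hn] using norm_sub_randersNorm_smul hW n

theorem stmt2 (V : Type*) [NormedAddCommGroup V] [InnerProductSpace ℝ V]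
    [FiniteDimensional ℝ V] [CompleteSpace V]
    (W : V) (hW : ‖W‖ < 1) (lam : ℝ) (hlam : lam = 1 - ‖W‖ ^ 2)
    (F : V → ℝ)
    (hF : ∀ y, F y = (Real.sqrt (lam * ⟪y, y⟫ + ⟪W, y⟫ ^ 2) - ⟪W, y⟫) / lam)
    (n : V) (hn : F n = 1)
    -- `ν = L(n) = F(n) • dF_n` is the Legendre transform of `n`
    (ν : V →L[ℝ] ℝ) (hν : ν = F n • fderiv ℝ F n)
    -- `u` is the `h`-dual (Riesz) vector of `ν`, so `n̄ = u / h*(ν) = u / ‖u‖`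
    (u : V) (hu : u = (InnerProductSpace.toDual ℝ V).symm ν)
    (nbar : V) (hnbar : nbar = ‖u‖⁻¹ • u) :
    n = nbar + W ∧ ‖nbar‖ = 1 :=
  stmt2_general V W hW lam hlam F hF n hn ν hν u hu nbar hnbar
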